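/- arXiv:1304.5220 — 2 statements merged into one kernel-verified Lean document; each statement's English description precedes it below -/
import Mathlib

section
/- Divide-and-Intersect bound for the BEC with list size 1: let P_e ∈ (0,1) and ε ∈ (0,1). If d_min > ln(P_e/8)/ln ε and P₁ := μ_ε{y : |S_y| > 1} > P_e, then μ_ε{y : |S_y| > 2} ≥ (3/16) · P₁². -/
/-- The product Bernoulli(ε) measure of a set of erasure patterns `y : Fin N → Bool`:
each coordinate is independently `true` (erased) with probability `ε`. -/
noncomputable def prodMeas {N : ℕ} (ε : ℝ) (S : Set (Fin N → Bool)) : ℝ :=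
  ∑ y : Fin N → Bool,
    Set.indicator S (fun y => ∏ i, (if y i = true then ε else 1 - ε)) y

/-- The support `I_u` of the codeword `uG`: the positions where `uG` equals 1. -/
def Iu {K N : ℕ} (G : Matrix (Fin K) (Fin N) (ZMod 2)) (u : Fin K → ZMod 2) :
    Finset (Fin N) :=
  Finset.univ.filter (fun i => Matrix.vecMul u G i = 1)

/-- `E_u`: the event that the message `u` is compatible with the received word,
i.e., every position of `I_u` is erased. -/
def Eu {K N : ℕ} (G : Matrix (Fin K) (Fin N) (ZMod 2)) (u : Fin K → ZMod 2) :
    Set (Fin N → Bool) :=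
  {y | ∀ i ∈ Iu G u, y i = true}

/-- `S_y`: the set of messages compatible with the erasure pattern `y`,
i.e., whose codeword vanishes on all non-erased positions. -/
def Sy {K N : ℕ} (G : Matrix (Fin K) (Fin N) (ZMod 2)) (y : Fin N → Bool) :
    Set (Fin K → ZMod 2) :=
  {u | ∀ i, y i = false → Matrix.vecMul u G i = 0}

section Aux

variable {K N : ℕ} {G : Matrix (Fin K) (Fin N) (ZMod 2)} {ε : ℝ}

/-- The weight function of the product measure. -/
noncomputable def wt (ε : ℝ) {N : ℕ} (y : Fin N → Bool) : ℝ :=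
  ∏ i, (if y i = true then ε else 1 - ε)

/-- The union of the compatibility events of a finite set of messages. -/
def Uof {K N : ℕ} (G : Matrix (Fin K) (Fin N) (ZMod 2)) (A : Finset (Fin K → ZMod 2)) :
    Set (Fin N → Bool) :=
  {y | ∃ u ∈ A, y ∈ Eu G u}

lemma wt_nonneg (h0 : 0 ≤ ε) (h1 : ε ≤ 1) (y : Fin N → Bool) : 0 ≤ wt ε y :=
  Finset.prod_nonneg fun i _ => by split <;> linarith

lemma prodMeas_eq (S : Set (Fin N → Bool)) :
    prodMeas ε S = ∑ y : Fin N → Bool, Set.indicator S (wt ε) y := rfl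

lemma prodMeas_nonneg (h0 : 0 ≤ ε) (h1 : ε ≤ 1) (S : Set (Fin N → Bool)) :
    0 ≤ prodMeas ε S :=
  Finset.sum_nonneg fun y _ => Set.indicator_nonneg (fun z _ => wt_nonneg h0 h1 z) y

lemma prodMeas_mono (h0 : 0 ≤ ε) (h1 : ε ≤ 1) {S T : Set (Fin N → Bool)} (h : S ⊆ T) :
    prodMeas ε S ≤ prodMeas ε T :=
  Finset.sum_le_sum fun y _ =>
    Set.indicator_le_indicator_of_subset h (fun z => wt_nonneg h0 h1 z) y

lemma prodMeas_union_le (h0 : 0 ≤ ε) (h1 : ε ≤ 1) (S T : Set (Fin N → Bool)) :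
    prodMeas ε (S ∪ T) ≤ prodMeas ε S + prodMeas ε T := by
  rw [prodMeas_eq, prodMeas_eq, prodMeas_eq, ← Finset.sum_add_distrib]
  refine Finset.sum_le_sum fun y _ => ?_
  by_cases hy : y ∈ S ∪ T
  · rw [Set.indicator_of_mem hy]
    rcases hy with hy | hy
    · rw [Set.indicator_of_mem hy]
      have := Set.indicator_nonneg (fun z (_ : z ∈ T) => wt_nonneg h0 h1 z) y
      linarith
    · rw [Set.indicator_of_mem (s := T) hy]
      have := Set.indicator_nonneg (fun z (_ : z ∈ S) => wt_nonneg h0 h1 z) y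
      linarith
  · rw [Set.indicator_of_notMem hy]
    have := Set.indicator_nonneg (fun z (_ : z ∈ S) => wt_nonneg h0 h1 z) y
    have := Set.indicator_nonneg (fun z (_ : z ∈ T) => wt_nonneg h0 h1 z) y
    linarith

lemma prodMeas_empty : prodMeas ε (∅ : Set (Fin N → Bool)) = 0 := by
  simp [prodMeas]

lemma sum_prod_bool (g : Fin N → Bool → ℝ) :
    ∑ y : Fin N → Bool, ∏ i, g i (y i) = ∏ i, (g i true + g i false) := by
  have h := Finset.prod_univ_sum (fun _ : Fin N => (Finset.univ : Finset Bool)) g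
  rw [Fintype.piFinset_univ] at h
  rw [← h]
  exact Finset.prod_congr rfl fun i _ => by rw [Fintype.sum_bool]

lemma sum_wt : ∑ y : Fin N → Bool, wt ε y = 1 := by
  have h := sum_prod_bool (fun (_ : Fin N) (b : Bool) => if b = true then ε else 1 - ε)
  simp only at h
  rw [show (∑ y : Fin N → Bool, wt ε y) =
    ∑ y : Fin N → Bool, ∏ i, (if y i = true then ε else 1 - ε) from rfl, h]
  simp

lemma prodMeas_Eu (G : Matrix (Fin K) (Fin N) (ZMod 2)) (u : Fin K → ZMod 2) :
    prodMeas ε (Eu G u) = ε ^ (Iu G u).card := by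
  classical
  set g : Fin N → Bool → ℝ := fun i b =>
    if i ∈ Iu G u then (if b = true then ε else 0) else (if b = true then ε else 1 - ε) with hg
  have key : ∀ y : Fin N → Bool, Set.indicator (Eu G u) (wt ε) y = ∏ i, g i (y i) := by
    intro y
    by_cases hy : y ∈ Eu G u
    · rw [Set.indicator_of_mem hy, wt]
      refine Finset.prod_congr rfl fun i _ => ?_
      by_cases hi : i ∈ Iu G u
      · have := hy i hi
        simp [hg, hi, this]
      · simp [hg, hi]
    · rw [Set.indicator_of_notMem hy]
      rw [Eu, Set.mem_setOf_eq] at hy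
      push_neg at hy
      obtain ⟨i, hi, hyi⟩ := hy
      refine (Finset.prod_eq_zero (Finset.mem_univ i) ?_).symm
      simp [hg, hi, hyi]
  rw [prodMeas_eq]
  simp_rw [key]
  rw [sum_prod_bool]
  have : ∀ i : Fin N, g i true + g i false = if i ∈ Iu G u then ε else 1 := by
    intro i; by_cases hi : i ∈ Iu G u <;> simp [hg, hi]
  simp_rw [this]
  rw [Finset.prod_ite_mem, Finset.univ_inter, Finset.prod_const]

lemma zmod2_cases (x : ZMod 2) : x = 0 ∨ x = 1 := by revert x; decide

lemma bool_wt_factor (ε : ℝ) (x y : Bool) :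
    ((if x = true then ε else 1 - ε) * if y = true then ε else 1 - ε)
      = ((if (x ⊓ y) = true then ε else 1 - ε) * if (x ⊔ y) = true then ε else 1 - ε) := by
  cases x <;> cases y <;> simp [mul_comm]

lemma mem_Sy_iff (y : Fin N → Bool) (u : Fin K → ZMod 2) :
    u ∈ Sy G y ↔ y ∈ Eu G u := by
  constructor
  · intro h i hi
    rw [Iu, Finset.mem_filter] at hi
    cases hyi : y i
    · have h0 := h i hyi
      rw [hi.2] at h0
      exact absurd h0 (by decide)
    · rfl
  · intro h i hyi
    rcases zmod2_cases (Matrix.vecMul u G i) with h0 | h1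
    · exact h0
    · have := h i (by rw [Iu, Finset.mem_filter]; exact ⟨Finset.mem_univ i, h1⟩)
      rw [hyi] at this; exact absurd this (by decide)

lemma zero_mem_Sy (y : Fin N → Bool) : (0 : Fin K → ZMod 2) ∈ Sy G y := by
  intro i _; rw [Matrix.zero_vecMul]; rfl

lemma event_one : {y : Fin N → Bool | 1 < (Sy G y).ncard}
    = {y | ∃ u : Fin K → ZMod 2, u ≠ 0 ∧ y ∈ Eu G u} := by
  ext y
  simp only [Set.mem_setOf_eq]
  constructor
  · intro h
    obtain ⟨a, ha, b, hb, hab⟩ := (Set.one_lt_ncard (Set.toFinite _)).1 h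
    rcases eq_or_ne a 0 with rfl | ha0
    · exact ⟨b, Ne.symm hab, (mem_Sy_iff y b).1 hb⟩
    · exact ⟨a, ha0, (mem_Sy_iff y a).1 ha⟩
  · rintro ⟨u, hu0, hu⟩
    exact (Set.one_lt_ncard (Set.toFinite _)).2
      ⟨u, (mem_Sy_iff y u).2 hu, 0, zero_mem_Sy y, hu0⟩

lemma event_two {u v : Fin K → ZMod 2} (hu : u ≠ 0) (hv : v ≠ 0) (huv : u ≠ v)
    {y : Fin N → Bool} (hyu : y ∈ Eu G u) (hyv : y ∈ Eu G v) :
    2 < (Sy G y).ncard := by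
  have hsub : ({0, u, v} : Set (Fin K → ZMod 2)) ⊆ Sy G y := by
    intro x hx
    simp only [Set.mem_insert_iff, Set.mem_singleton_iff] at hx
    rcases hx with h | h | h <;> rw [h]
    · exact zero_mem_Sy y
    · exact (mem_Sy_iff y u).2 hyu
    · exact (mem_Sy_iff y v).2 hyv
  have h2 : ({u, v} : Set (Fin K → ZMod 2)).ncard = 2 := by
    rw [Set.ncard_insert_of_notMem (by simpa using huv) (Set.toFinite _),
      Set.ncard_singleton]
  have hcard : ({0, u, v} : Set (Fin K → ZMod 2)).ncard = 3 := by
    rw [Set.ncard_insert_of_notMem (by simp [eq_comm, hu, hv]) (Set.toFinite _), h2]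
  have := Set.ncard_le_ncard hsub (Set.toFinite _)
  omega

end Aux

/-- Divide-and-Intersect bound for the BEC with list size 1. -/
theorem DI_bound_BEC_list_one (K N : ℕ) (G : Matrix (Fin K) (Fin N) (ZMod 2))
    (ε : ℝ) (hε0 : 0 < ε) (hε1 : ε < 1) (Pe : ℝ) (hPe0 : 0 < Pe) (hPe1 : Pe < 1)
    (hdmin : ∀ u : Fin K → ZMod 2, u ≠ 0 →
      Real.log (Pe / 8) / Real.log ε < ((Iu G u).card : ℝ))
    (hbig : prodMeas ε {y : Fin N → Bool | 1 < (Sy G y).ncard} > Pe) :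
    prodMeas ε {y : Fin N → Bool | 2 < (Sy G y).ncard}
      ≥ 3 / 16 * (prodMeas ε {y : Fin N → Bool | 1 < (Sy G y).ncard}) ^ 2 := by
  classical
  have hε0' : (0:ℝ) ≤ ε := hε0.le
  have hε1' : ε ≤ 1 := hε1.le
  have hEu_small : ∀ u : Fin K → ZMod 2, u ≠ 0 → prodMeas ε (Eu G u) < Pe / 8 := by
    intro u hu
    rw [prodMeas_Eu]
    have hlogε : Real.log ε < 0 := Real.log_neg hε0 hε1
    have h := hdmin u hu
    rw [div_lt_iff_of_neg hlogε] at h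
    have hpow : Real.log (ε ^ (Iu G u).card) < Real.log (Pe / 8) := by
      rw [Real.log_pow]; exact h
    exact (Real.log_lt_log_iff (pow_pos hε0 _) (by linarith)).1 hpow
  set P₁ : ℝ := prodMeas ε {y : Fin N → Bool | 1 < (Sy G y).ncard} with hP₁
  have hP₁pos : 0 < P₁ := lt_trans hPe0 hbig
  set T : Finset (Fin K → ZMod 2) := Finset.univ.filter (fun u => u ≠ 0) with hT
  have hUT : {y : Fin N → Bool | 1 < (Sy G y).ncard} = Uof G T := by
    rw [event_one]; ext y; simp [Uof, hT]
  have hUTP : prodMeas ε (Uof G T) = P₁ := by rw [hP₁, hUT]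
  -- subadditivity over erasing an element
  have hU_erase : ∀ (A : Finset (Fin K → ZMod 2)) (u : Fin K → ZMod 2), u ∈ A →
      prodMeas ε (Uof G A) ≤ prodMeas ε (Uof G (A.erase u)) + prodMeas ε (Eu G u) := by
    intro A u hu
    have hsub : Uof G A ⊆ Uof G (A.erase u) ∪ Eu G u := by
      rintro y ⟨v, hv, hy⟩
      rcases eq_or_ne v u with rfl | hvu
      · exact Or.inr hy
      · exact Or.inl ⟨v, Finset.mem_erase.2 ⟨hvu, hv⟩, hy⟩
    calc prodMeas ε (Uof G A) ≤ prodMeas ε (Uof G (A.erase u) ∪ Eu G u) :=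
          prodMeas_mono hε0' hε1' hsub
      _ ≤ _ := prodMeas_union_le hε0' hε1' _ _
  -- select a minimal subset A of T with measure ≥ P₁/2
  have hTmem : T ∈ T.powerset.filter (fun B => P₁ / 2 ≤ prodMeas ε (Uof G B)) := by
    rw [Finset.mem_filter, Finset.mem_powerset]
    refine ⟨Finset.Subset.refl _, ?_⟩
    rw [hUTP]; linarith
  obtain ⟨A, hA𝒮, hAmin⟩ := Finset.exists_min_image
    (T.powerset.filter (fun B => P₁ / 2 ≤ prodMeas ε (Uof G B))) Finset.card ⟨T, hTmem⟩
  rw [Finset.mem_filter, Finset.mem_powerset] at hA𝒮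
  obtain ⟨hAT, hAge⟩ := hA𝒮
  have hAne : A.Nonempty := by
    rcases Finset.eq_empty_or_nonempty A with rfl | h
    · exfalso
      have h0 : Uof G (∅ : Finset (Fin K → ZMod 2)) = ∅ := by ext y; simp [Uof]
      rw [h0, prodMeas_empty] at hAge; linarith
    · exact h
  obtain ⟨u, huA⟩ := hAne
  have hu0 : u ≠ 0 := by
    have := hAT huA; rw [hT, Finset.mem_filter] at this; exact this.2
  have herase_lt : prodMeas ε (Uof G (A.erase u)) < P₁ / 2 := by
    by_contra h
    push_neg at h
    have hmem : A.erase u ∈ T.powerset.filter (fun B => P₁ / 2 ≤ prodMeas ε (Uof G B)) := by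
      rw [Finset.mem_filter, Finset.mem_powerset]
      exact ⟨(Finset.erase_subset _ _).trans hAT, h⟩
    have h1 := hAmin _ hmem
    have h2 := Finset.card_erase_lt_of_mem huA
    omega
  have hAlt : prodMeas ε (Uof G A) < P₁ / 2 + Pe / 8 :=
    lt_of_le_of_lt (hU_erase A u huA)
      (by have := hEu_small u hu0; linarith)
  -- the complement has measure ≥ 3/8 P₁
  have hsplit : Uof G T ⊆ Uof G A ∪ Uof G (T \ A) := by
    rintro y ⟨v, hv, hy⟩
    by_cases hvA : v ∈ A
    · exact Or.inl ⟨v, hvA, hy⟩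
    · exact Or.inr ⟨v, Finset.mem_sdiff.2 ⟨hv, hvA⟩, hy⟩
  have hBge : 3 / 8 * P₁ ≤ prodMeas ε (Uof G (T \ A)) := by
    have h1 : P₁ ≤ prodMeas ε (Uof G A) + prodMeas ε (Uof G (T \ A)) := by
      calc P₁ = prodMeas ε (Uof G T) := hUTP.symm
        _ ≤ prodMeas ε (Uof G A ∪ Uof G (T \ A)) := prodMeas_mono hε0' hε1' hsplit
        _ ≤ _ := prodMeas_union_le hε0' hε1' _ _
    have hPeP₁ : Pe < P₁ := hbig
    linarith
  -- FKG: the two unions are upper sets, hence positively correlated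
  have hupper : ∀ B : Finset (Fin K → ZMod 2), ∀ y z : Fin N → Bool,
      y ≤ z → y ∈ Uof G B → z ∈ Uof G B := by
    rintro B y z hyz ⟨v, hv, hy⟩
    refine ⟨v, hv, fun i hi => ?_⟩
    have h1 := hy i hi
    have h2 := hyz i
    rw [h1] at h2
    exact le_antisymm (by cases z i <;> simp) h2
  set f : (Fin N → Bool) → ℝ := Set.indicator (Uof G A) (fun _ => 1) with hf
  set g : (Fin N → Bool) → ℝ := Set.indicator (Uof G (T \ A)) (fun _ => 1) with hgdef
  have hfmono : Monotone f := by
    intro y z hyz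
    by_cases hy : y ∈ Uof G A
    · rw [hf, Set.indicator_of_mem hy, Set.indicator_of_mem (hupper A y z hyz hy)]
    · rw [hf, Set.indicator_of_notMem hy]
      exact Set.indicator_nonneg (fun _ _ => zero_le_one) z
  have hgmono : Monotone g := by
    intro y z hyz
    by_cases hy : y ∈ Uof G (T \ A)
    · rw [hgdef, Set.indicator_of_mem hy, Set.indicator_of_mem (hupper _ y z hyz hy)]
    · rw [hgdef, Set.indicator_of_notMem hy]
      exact Set.indicator_nonneg (fun _ _ => zero_le_one) z
  have hμsup : ∀ a b : Fin N → Bool, wt ε a * wt ε b ≤ wt ε (a ⊓ b) * wt ε (a ⊔ b) := by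
    intro a b
    rw [wt, wt, wt, wt, ← Finset.prod_mul_distrib, ← Finset.prod_mul_distrib]
    refine le_of_eq (Finset.prod_congr rfl fun i _ => ?_)
    simp only [Pi.inf_apply, Pi.sup_apply]
    exact bool_wt_factor ε (a i) (b i)
  have hfkg := fkg f g (wt ε : (Fin N → Bool) → ℝ)
    (fun y => wt_nonneg hε0' hε1' y)
    (fun y => Set.indicator_nonneg (fun _ _ => zero_le_one) y)
    (fun y => Set.indicator_nonneg (fun _ _ => zero_le_one) y)
    hfmono hgmono hμsup
  have hsumf : ∑ y : Fin N → Bool, wt ε y * f y = prodMeas ε (Uof G A) := by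
    rw [prodMeas_eq]
    refine Finset.sum_congr rfl fun y _ => ?_
    by_cases hy : y ∈ Uof G A
    · rw [hf, Set.indicator_of_mem hy, Set.indicator_of_mem hy, mul_one]
    · rw [hf, Set.indicator_of_notMem hy, Set.indicator_of_notMem hy, mul_zero]
  have hsumg : ∑ y : Fin N → Bool, wt ε y * g y = prodMeas ε (Uof G (T \ A)) := by
    rw [prodMeas_eq]
    refine Finset.sum_congr rfl fun y _ => ?_
    by_cases hy : y ∈ Uof G (T \ A)
    · rw [hgdef, Set.indicator_of_mem hy, Set.indicator_of_mem hy, mul_one]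
    · rw [hgdef, Set.indicator_of_notMem hy, Set.indicator_of_notMem hy, mul_zero]
  have hsumfg : ∑ y : Fin N → Bool, wt ε y * (f y * g y)
      = prodMeas ε (Uof G A ∩ Uof G (T \ A)) := by
    rw [prodMeas_eq]
    refine Finset.sum_congr rfl fun y _ => ?_
    by_cases hy : y ∈ Uof G A ∩ Uof G (T \ A)
    · rw [Set.indicator_of_mem hy, hf, hgdef, Set.indicator_of_mem hy.1,
        Set.indicator_of_mem hy.2, mul_one, mul_one]
    · rw [Set.indicator_of_notMem hy]
      rcases (by tauto : y ∉ Uof G A ∨ y ∉ Uof G (T \ A)) with h | h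
      · rw [hf, Set.indicator_of_notMem h, zero_mul, mul_zero]
      · rw [hgdef, Set.indicator_of_notMem h, mul_zero, mul_zero]
  rw [hsumf, hsumg, hsumfg, sum_wt, one_mul] at hfkg
  -- the intersection is contained in the target event
  have hinter : Uof G A ∩ Uof G (T \ A) ⊆ {y : Fin N → Bool | 2 < (Sy G y).ncard} := by
    rintro y ⟨⟨a, haA, hya⟩, ⟨b, hbB, hyb⟩⟩
    have hbT := Finset.mem_sdiff.1 hbB
    have hab : a ≠ b := fun h => hbT.2 (h ▸ haA)
    have ha0 : a ≠ 0 := by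
      have := hAT haA; rw [hT, Finset.mem_filter] at this; exact this.2
    have hb0 : b ≠ 0 := by
      have := hbT.1; rw [hT, Finset.mem_filter] at this; exact this.2
    exact event_two ha0 hb0 hab hya hyb
  have hfinal : prodMeas ε (Uof G A ∩ Uof G (T \ A))
      ≤ prodMeas ε {y : Fin N → Bool | 2 < (Sy G y).ncard} :=
    prodMeas_mono hε0' hε1' hinter
  have hprod : P₁ / 2 * (3 / 8 * P₁) ≤ prodMeas ε (Uof G A) * prodMeas ε (Uof G (T \ A)) := by
    have h1 : 0 ≤ prodMeas ε (Uof G (T \ A)) := prodMeas_nonneg hε0' hε1' _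
    have h2 : 0 ≤ P₁ / 2 := by linarith
    nlinarith
  rw [ge_iff_le]
  nlinarith [hfkg, hfinal, hprod]
end

section
/- Unions of list-likelihood events are positively correlated: let L ≥ 1 and let P'₁, P'₂ be two families of L-element sets of messages in F₂^K. Then ν( (∪_{T∈P'₁} E'_T) ∩ (∪_{T'∈P'₂} E'_{T'}) ) ≥ ν(∪_{T∈P'₁} E'_T) · ν(∪_{T'∈P'₂} E'_{T'}). -/
/-- The product measure on `Fin N → Y` whose coordinates are i.i.d. with law `p0`
(the channel output distribution when the all-zero codeword is sent). -/
noncomputable def nuMeas {Y : Type} [Fintype Y] {N : ℕ} (p0 : Y → ℝ)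
    (S : Set (Fin N → Y)) : ℝ :=
  ∑ y : Fin N → Y, Set.indicator S (fun y => ∏ i, p0 (y i)) y

/-- `E'_u`: the event that the likelihood of message `u` given `y` is at least
that of the all-zero message. -/
def Eu' {Y : Type} {K N : ℕ} (G : Matrix (Fin K) (Fin N) (ZMod 2))
    (p0 p1 : Y → ℝ) (u : Fin K → ZMod 2) : Set (Fin N → Y) :=
  {y | ∏ i ∈ Iu G u, p0 (y i) ≤ ∏ i ∈ Iu G u, p1 (y i)}

/-- `E'_T`: the event that every message in the finite set `T` is at least as
likely as the all-zero message. -/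
def EuT' {Y : Type} {K N : ℕ} (G : Matrix (Fin K) (Fin N) (ZMod 2))
    (p0 p1 : Y → ℝ) (T : Finset (Fin K → ZMod 2)) : Set (Fin N → Y) :=
  ⋂ u ∈ T, Eu' G p0 p1 u

theorem prod_apply_inf_mul_prod_apply_sup {ι α R : Type*} [Fintype ι] [LinearOrder α]
    [CommMonoid R] (p : α → R) (x y : ι → α) :
    (∏ i, p ((x ⊓ y) i)) * ∏ i, p ((x ⊔ y) i) = (∏ i, p (x i)) * ∏ i, p (y i) := by
  simp only [← Finset.prod_mul_distrib]
  exact Finset.prod_congr rfl fun i _ => fn_min_mul_fn_max p (x i) (y i)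

theorem IsUpperSet.monotone_indicator_one {β M : Type*} [Preorder β] [Zero M] [One M]
    [Preorder M] [ZeroLEOneClass M] {A : Set β} (hA : IsUpperSet A) :
    Monotone (A.indicator (1 : β → M)) := by
  intro x y hxy
  by_cases hx : x ∈ A
  · simp [hx, hA hxy hx]
  · simp only [Set.indicator_of_notMem hx]
    exact Set.indicator_nonneg (fun _ _ => zero_le_one) y

theorem IsUpperSet.sum_indicator_pi_prod_mul_le {ι α : Type*} [Fintype ι] [DecidableEq ι]
    [Fintype α] [LinearOrder α] {p : α → ℝ}
    (hp : 0 ≤ p) (hp_sum : ∑ a, p a = 1) {A B : Set (ι → α)} (hA : IsUpperSet A)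
    (hB : IsUpperSet B) :
    (∑ x, A.indicator (fun x => ∏ i, p (x i)) x) * ∑ x, B.indicator (fun x => ∏ i, p (x i)) x
      ≤ ∑ x, (A ∩ B).indicator (fun x => ∏ i, p (x i)) x := by
  set μ : (ι → α) → ℝ := fun x => ∏ i, p (x i)
  have hμ_nonneg : 0 ≤ μ := fun x => Finset.prod_nonneg fun i _ => hp (x i)
  have hμ_total : ∑ x, μ x = 1 := by
    simp only [μ, ← Fintype.prod_sum, hp_sum, Finset.prod_const_one]
  have hfkg := fkg (f := A.indicator 1) (g := B.indicator 1) (μ := μ) hμ_nonneg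
    (Set.indicator_nonneg fun _ _ => zero_le_one) (Set.indicator_nonneg fun _ _ => zero_le_one)
    hA.monotone_indicator_one hB.monotone_indicator_one
    (fun x y => (prod_apply_inf_mul_prod_apply_sup p x y).ge)
  have hweight (S : Set (ι → α)) (x : ι → α) : μ x * S.indicator 1 x = S.indicator μ x := by
    by_cases hx : x ∈ S <;> simp [hx]
  simpa only [hμ_total, one_mul, ← Pi.mul_apply (A.indicator 1) (B.indicator 1),
    ← Set.inter_indicator_one, hweight] using hfkg

theorem exists_linearOrder_monotone {Y β : Type*} [LinearOrder β] (f : Y → β) :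
    ∃ _ : LinearOrder Y, Monotone f := by
  let : LinearOrder Y := IsWellOrder.linearOrder WellOrderingRel
  exact ⟨LinearOrder.lift' (fun y => toLex (f y, y)) fun y y' h => congrArg Prod.snd h,
    fun y y' h => Prod.Lex.monotone_fst _ _ h⟩

/-- Outputs with `p0 = 0` go on top even when `p1 = 0` too: a word with such a coordinate in
`I_u` lies in `E'_u`. -/
noncomputable def likelihoodRatio {Y : Type*} (p0 p1 : Y → ℝ) (y : Y) : WithTop ℝ :=
  if p0 y = 0 then ⊤ else ↑(p1 y / p0 y)

theorem isUpperSet_setOf_prod_le_prod {ι Y : Type*} [Preorder Y] {p0 p1 : Y → ℝ}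
    (hp0 : ∀ y, 0 ≤ p0 y) (hp1 : ∀ y, 0 ≤ p1 y) (hmono : Monotone (likelihoodRatio p0 p1))
    (I : Finset ι) : IsUpperSet {y : ι → Y | ∏ i ∈ I, p0 (y i) ≤ ∏ i ∈ I, p1 (y i)} := by
  intro y y' hyy' (hy : ∏ i ∈ I, p0 (y i) ≤ ∏ i ∈ I, p1 (y i))
  show ∏ i ∈ I, p0 (y' i) ≤ ∏ i ∈ I, p1 (y' i)
  by_cases hzero : ∃ i ∈ I, p0 (y' i) = 0
  · obtain ⟨i, hi, h0⟩ := hzero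
    rw [Finset.prod_eq_zero hi h0]
    exact Finset.prod_nonneg fun j _ => hp1 _
  push Not at hzero
  have hy_ne (i) (hi : i ∈ I) : p0 (y i) ≠ 0 := by
    intro h0
    simpa [likelihoodRatio, h0, hzero i hi] using hmono (hyy' i)
  have hle (i) (hi : i ∈ I) : p1 (y i) / p0 (y i) ≤ p1 (y' i) / p0 (y' i) := by
    simpa [likelihoodRatio, hy_ne i hi, hzero i hi] using hmono (hyy' i)
  have hpos {z : ι → Y} (hz : ∀ i ∈ I, p0 (z i) ≠ 0) : 0 < ∏ i ∈ I, p0 (z i) :=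
    Finset.prod_pos fun i hi => (hp0 _).lt_of_ne' (hz i hi)
  rw [← one_le_div (hpos hzero), ← Finset.prod_div_distrib]
  calc 1 ≤ ∏ i ∈ I, p1 (y i) / p0 (y i) := by
        rwa [Finset.prod_div_distrib, one_le_div (hpos hy_ne)]
    _ ≤ ∏ i ∈ I, p1 (y' i) / p0 (y' i) :=
        Finset.prod_le_prod (fun i _ => div_nonneg (hp1 _) (hp0 _)) hle

theorem EuT'_unions_pos_correlated_general (Y : Type) [Fintype Y] (K N : ℕ)
    (G : Matrix (Fin K) (Fin N) (ZMod 2)) (p0 p1 : Y → ℝ)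
    (hp0 : ∀ y, 0 ≤ p0 y) (hp1 : ∀ y, 0 ≤ p1 y)
    (hp0sum : ∑ y, p0 y = 1)
    (P₁ P₂ : Set (Finset (Fin K → ZMod 2))) :
    nuMeas p0 ((⋃ T ∈ P₁, EuT' G p0 p1 T) ∩ ⋃ T ∈ P₂, EuT' G p0 p1 T)
      ≥ nuMeas p0 (⋃ T ∈ P₁, EuT' G p0 p1 T)
          * nuMeas p0 (⋃ T ∈ P₂, EuT' G p0 p1 T) := by
  obtain ⟨_, hmono⟩ := exists_linearOrder_monotone (likelihoodRatio p0 p1)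
  have hupper (P : Set (Finset (Fin K → ZMod 2))) : IsUpperSet (⋃ T ∈ P, EuT' G p0 p1 T) :=
    isUpperSet_iUnion₂ fun _ _ => isUpperSet_iInter₂ fun u _ =>
      isUpperSet_setOf_prod_le_prod hp0 hp1 hmono (Iu G u)
  exact (hupper P₁).sum_indicator_pi_prod_mul_le hp0 hp0sum (hupper P₂)

/-- Unions of list-likelihood events are positively correlated. -/
theorem EuT'_unions_pos_correlated (Y : Type) [Fintype Y] (K N : ℕ)
    (G : Matrix (Fin K) (Fin N) (ZMod 2)) (p0 p1 : Y → ℝ)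
    (hp0 : ∀ y, 0 ≤ p0 y) (hp1 : ∀ y, 0 ≤ p1 y)
    (hp0sum : ∑ y, p0 y = 1) (hp1sum : ∑ y, p1 y = 1)
    (L : ℕ) (hL : 1 ≤ L)
    (P₁ P₂ : Set (Finset (Fin K → ZMod 2)))
    (hP₁ : ∀ T ∈ P₁, T.card = L) (hP₂ : ∀ T ∈ P₂, T.card = L) :
    nuMeas p0 ((⋃ T ∈ P₁, EuT' G p0 p1 T) ∩ ⋃ T ∈ P₂, EuT' G p0 p1 T)
      ≥ nuMeas p0 (⋃ T ∈ P₁, EuT' G p0 p1 T)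
          * nuMeas p0 (⋃ T ∈ P₂, EuT' G p0 p1 T) :=
  EuT'_unions_pos_correlated_general Y K N G p0 p1 hp0 hp1 hp0sum P₁ P₂
end
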